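/- arXiv:2505.03497 — 3 statements merged into one kernel-verified Lean document; each statement's English description precedes it below -/
import Mathlib

section
/- Every simple graph on 8 vertices with exactly 14 edges contains a clique of size 3 or an independent set of size 4. -/
theorem stmt_0 (G : SimpleGraph (Fin 8)) [DecidableRel G.Adj]
    (h : G.edgeFinset.card = 14) :
    (∃ s : Finset (Fin 8), G.IsNClique 3 s) ∨
    (∃ s : Finset (Fin 8), Gᶜ.IsNClique 4 s) := by
  by_contra hc
  push_neg at hc
  obtain ⟨h3, h4⟩ := hc
  have hdeg : ∀ v : Fin 8, G.degree v ≤ 3 := by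
    intro v
    by_contra hd
    push_neg at hd
    obtain ⟨t, hts, htc⟩ := Finset.exists_subset_card_eq (by rw [G.card_neighborFinset_eq_degree]; omega : 4 ≤ (G.neighborFinset v).card)
    apply h4 t
    constructor
    · intro x hx y hy hxy
      simp only [SimpleGraph.compl_adj]
      refine ⟨hxy, ?_⟩
      intro hadj
      have hvx : G.Adj v x := (SimpleGraph.mem_neighborFinset G v x).1 (hts hx)
      have hvy : G.Adj v y := (SimpleGraph.mem_neighborFinset G v y).1 (hts hy)
      apply h3 {v, x, y}
      constructor
      · intro a ha b hb hab
        simp only [Finset.coe_insert, Set.mem_insert_iff, Finset.coe_singleton,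
          Set.mem_singleton_iff] at ha hb
        rcases ha with rfl | rfl | rfl <;> rcases hb with rfl | rfl | rfl <;>
          first
          | exact absurd rfl hab
          | assumption
          | exact hvx.symm
          | exact hvy.symm
          | exact hadj.symm
      · have hvx' : v ≠ x := hvx.ne
        have hvy' : v ≠ y := hvy.ne
        rw [Finset.card_insert_of_notMem (by simp [hvx', hvy']),
          Finset.card_insert_of_notMem (by simpa using hxy), Finset.card_singleton]
    · exact htc
  have hsum := G.sum_degrees_eq_twice_card_edges
  have hle : ∑ v : Fin 8, G.degree v ≤ ∑ _v : Fin 8, 3 :=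
    Finset.sum_le_sum fun v _ => hdeg v
  simp at hle
  omega
end

section
/- Every simple graph on 8 vertices whose clique number equals 2 and independence number equals 3 has at least 10 and at most 12 edges. -/
/-!
Triangle-freeness makes every neighbourhood independent, so `α ≤ 3` bounds all degrees by 3
and hence the number of edges by 12.

For the lower bound write `d̄ = n - 1 - d` for degrees in the complement and fix a non-edge `vx`.
The common non-neighbours of `v` and `x` are pairwise adjacent (else there is an independent
4-set), so there are at most 2 of them, and `x` has at least `d̄(v) - 3` neighbours among the
non-neighbours of `v`. Count the triples `(v, x, y)` with `xy` an edge and `v` adjacent to neither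
end, once by `v` and once by the edge: since adjacent vertices have disjoint neighbourhoods, an
edge `xy` lies in exactly `n - d(x) - d(y)` of them. This gives
`∑ d̄² + 2 ∑ d² ≤ n ∑ d + 3 ∑ d̄`, which for `n = 8` reads `∑ 3 (d - 2) (d - 3) ≤ 4 ∑ d - 80`;
the left side is nonnegative for integer degrees, so `∑ d ≥ 20`.
-/

open Finset

namespace SimpleGraph

variable {V : Type*}

lemma IsClique.card_lt_of_cliqueFree {G : SimpleGraph V} {n : ℕ} {s : Finset V}
    (hG : G.CliqueFree n) (hs : G.IsClique (s : Set V)) : #s < n := by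
  by_contra! h
  obtain ⟨t, hts, rfl⟩ := s.exists_subset_card_eq h
  exact hG t ⟨hs.subset (coe_subset.mpr hts), rfl⟩

variable [Fintype V] (G : SimpleGraph V) [DecidableRel G.Adj]

lemma degree_lt_of_cliqueFree_compl {k : ℕ} (h3 : G.CliqueFree 3) (hk : Gᶜ.CliqueFree k)
    (v : V) : G.degree v < k := by
  rw [← card_neighborFinset_eq_degree]
  refine IsClique.card_lt_of_cliqueFree hk ?_
  rw [isClique_compl, coe_neighborFinset]
  exact isIndepSet_neighborSet_of_triangleFree G h3 v

lemma sum_degree_le_of_cliqueFree_compl {k : ℕ} (h3 : G.CliqueFree 3)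
    (hk : Gᶜ.CliqueFree (k + 1)) : ∑ v, G.degree v ≤ Fintype.card V * k :=
  (sum_le_sum fun v _ ↦ Nat.le_of_lt_succ (G.degree_lt_of_cliqueFree_compl h3 hk v)).trans_eq
    (by simp)

lemma sum_sum_neighborFinset (f : V → ℕ) :
    ∑ x, ∑ y ∈ G.neighborFinset x, f y = ∑ y, G.degree y * f y := by
  rw [sum_comm' (t' := univ) (s' := fun y ↦ G.neighborFinset y) (by simp [G.adj_comm])]
  simp

variable [DecidableEq V]

lemma sum_sum_card_inter_neighborFinset (H : SimpleGraph V) [DecidableRel H.Adj] :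
    ∑ v, ∑ x ∈ H.neighborFinset v, #(G.neighborFinset x ∩ H.neighborFinset v) =
      ∑ x, ∑ y ∈ G.neighborFinset x, #(H.neighborFinset x ∩ H.neighborFinset y) := by
  rw [sum_comm' (t' := univ) (s' := fun x ↦ H.neighborFinset x) (by simp [H.adj_comm])]
  refine sum_congr rfl fun x _ ↦ ?_
  convert sum_card_bipartiteAbove_eq_sum_card_bipartiteBelow (r := H.Adj) using 3 <;>
    ext <;> simp [bipartiteAbove, bipartiteBelow, H.adj_comm]

lemma isClique_inter_compl_neighborFinset (h4 : Gᶜ.CliqueFree 4) {v x : V} (hvx : Gᶜ.Adj v x) :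
    G.IsClique (Gᶜ.neighborFinset v ∩ Gᶜ.neighborFinset x : Finset V) := by
  intro y hy z hz hyz
  simp only [coe_inter, Set.mem_inter_iff, mem_coe, mem_neighborFinset] at hy hz
  by_contra hyz'
  have hzvx : Gᶜ.IsNClique 3 {z, v, x} :=
    is3Clique_triple_iff.mpr ⟨hz.1.symm, hz.2.symm, hvx⟩
  refine h4 (insert y {z, v, x}) (hzvx.insert ?_)
  simp only [mem_insert, mem_singleton, forall_eq_or_imp, forall_eq]
  exact ⟨(compl_adj G y z).mpr ⟨hyz, hyz'⟩, hy.1.symm, hy.2.symm⟩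

lemma card_inter_compl_neighborFinset_le (h3 : G.CliqueFree 3) (h4 : Gᶜ.CliqueFree 4) {v x : V}
    (hvx : Gᶜ.Adj v x) : #(Gᶜ.neighborFinset v ∩ Gᶜ.neighborFinset x) ≤ 2 :=
  Nat.le_of_lt_succ ((G.isClique_inter_compl_neighborFinset h4 hvx).card_lt_of_cliqueFree h3)

lemma degree_compl_le_card_inter_add_three (h3 : G.CliqueFree 3) (h4 : Gᶜ.CliqueFree 4)
    {v x : V} (hvx : Gᶜ.Adj v x) :
    Gᶜ.degree v ≤ #(G.neighborFinset x ∩ Gᶜ.neighborFinset v) + 3 := by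
  have hsub : Gᶜ.neighborFinset v ⊆ insert x ((G.neighborFinset x ∩ Gᶜ.neighborFinset v) ∪
      (Gᶜ.neighborFinset v ∩ Gᶜ.neighborFinset x)) := by
    intro y hy
    rw [mem_neighborFinset] at hy
    by_cases hxy : x = y
    · simp [hxy]
    by_cases hadj : G.Adj x y <;> simp [hy, hadj, hxy, Ne.symm hxy]
  rw [← card_neighborFinset_eq_degree]
  calc _ ≤ _ := card_le_card hsub
    _ ≤ _ := card_insert_le _ _
    _ ≤ #(G.neighborFinset x ∩ Gᶜ.neighborFinset v) + 2 + 1 := by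
      grw [card_union_le, G.card_inter_compl_neighborFinset_le h3 h4 hvx]

lemma card_inter_compl_neighborFinset_add_degree_add_degree (h3 : G.CliqueFree 3) {x y : V}
    (hxy : G.Adj x y) :
    #(Gᶜ.neighborFinset x ∩ Gᶜ.neighborFinset y) + (G.degree x + G.degree y) =
      Fintype.card V := by
  have hdisj : Disjoint (G.neighborFinset x) (G.neighborFinset y) := by
    rw [Finset.disjoint_left]
    intro z hxz hyz
    rw [mem_neighborFinset] at hxz hyz
    exact h3 {x, y, z} (is3Clique_triple_iff.mpr ⟨hxy, hxz, hyz⟩)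
  have hcompl : Gᶜ.neighborFinset x ∩ Gᶜ.neighborFinset y =
      (G.neighborFinset x ∪ G.neighborFinset y)ᶜ := by
    ext z
    simp only [mem_inter, mem_neighborFinset, compl_adj, mem_compl, mem_union, not_or]
    refine ⟨fun h ↦ ⟨h.1.2, h.2.2⟩, fun ⟨hxz, hyz⟩ ↦ ⟨⟨?_, hxz⟩, ?_, hyz⟩⟩
    · rintro rfl; exact hyz hxy.symm
    · rintro rfl; exact hxz hxy
  rw [hcompl, ← card_neighborFinset_eq_degree, ← card_neighborFinset_eq_degree,
    ← card_union_of_disjoint hdisj, card_compl_add_card]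

lemma sum_degree_compl_sq_add_le (h3 : G.CliqueFree 3) (h4 : Gᶜ.CliqueFree 4) :
    ∑ v, Gᶜ.degree v ^ 2 + 2 * ∑ v, G.degree v ^ 2 ≤
      Fintype.card V * ∑ v, G.degree v + 3 * ∑ v, Gᶜ.degree v := by
  have hlow : ∑ v, Gᶜ.degree v ^ 2 ≤
      ∑ v, ∑ x ∈ Gᶜ.neighborFinset v, #(G.neighborFinset x ∩ Gᶜ.neighborFinset v) +
        3 * ∑ v, Gᶜ.degree v :=
    calc ∑ v, Gᶜ.degree v ^ 2 = ∑ v, ∑ _x ∈ Gᶜ.neighborFinset v, Gᶜ.degree v := by simp [sq]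
      _ ≤ ∑ v, ∑ x ∈ Gᶜ.neighborFinset v, (#(G.neighborFinset x ∩ Gᶜ.neighborFinset v) + 3) :=
        sum_le_sum fun v _ ↦ sum_le_sum fun x hx ↦
          G.degree_compl_le_card_inter_add_three h3 h4 ((mem_neighborFinset _ _ _).mp hx)
      _ = _ := by simp [sum_add_distrib, mul_sum, mul_comm]
  have hexact : ∑ x, ∑ y ∈ G.neighborFinset x, #(Gᶜ.neighborFinset x ∩ Gᶜ.neighborFinset y) +
      2 * ∑ v, G.degree v ^ 2 = Fintype.card V * ∑ v, G.degree v :=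
    calc _ = ∑ x, ∑ y ∈ G.neighborFinset x,
          (#(Gᶜ.neighborFinset x ∩ Gᶜ.neighborFinset y) + (G.degree x + G.degree y)) := by
          simp [sum_add_distrib, sum_sum_neighborFinset, sq, two_mul]
      _ = ∑ x, ∑ _y ∈ G.neighborFinset x, Fintype.card V :=
        sum_congr rfl fun x _ ↦ sum_congr rfl fun y hy ↦
          G.card_inter_compl_neighborFinset_add_degree_add_degree h3
            ((mem_neighborFinset _ _ _).mp hy)
      _ = Fintype.card V * ∑ v, G.degree v := by simp [mul_sum, mul_comm]
  rw [sum_sum_card_inter_neighborFinset] at hlow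
  omega

lemma twenty_le_sum_degree (hV : Fintype.card V = 8) (h3 : G.CliqueFree 3)
    (h4 : Gᶜ.CliqueFree 4) : 20 ≤ ∑ v, G.degree v := by
  have hpt : ∀ v,
      4 * G.degree v + 10 + 3 * Gᶜ.degree v ≤ Gᶜ.degree v ^ 2 + 2 * G.degree v ^ 2 := by
    intro v
    have hd : G.degree v < 8 := hV ▸ G.degree_lt_card_verts v
    rw [degree_compl, hV]
    interval_cases G.degree v <;> norm_num
  have hsum := sum_le_sum fun v (_ : v ∈ univ) ↦ hpt v
  simp only [sum_add_distrib, ← mul_sum, sum_const, card_univ, hV, smul_eq_mul] at hsum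
  have hkey := G.sum_degree_compl_sq_add_le h3 h4
  rw [hV] at hkey
  omega

end SimpleGraph

theorem stmt_1 (G : SimpleGraph (Fin 8)) [DecidableRel G.Adj]
    (hclique : (∃ s : Finset (Fin 8), G.IsNClique 2 s) ∧ G.CliqueFree 3)
    (hindep : (∃ s : Finset (Fin 8), Gᶜ.IsNClique 3 s) ∧ Gᶜ.CliqueFree 4) :
    10 ≤ G.edgeFinset.card ∧ G.edgeFinset.card ≤ 12 := by
  obtain ⟨-, h3⟩ := hclique
  obtain ⟨-, h4⟩ := hindep
  have hub : ∑ v, G.degree v ≤ 8 * 3 := by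
    simpa using G.sum_degree_le_of_cliqueFree_compl h3 h4
  have hlb := G.twenty_le_sum_degree (Fintype.card_fin 8) h3 h4
  rw [G.sum_degrees_eq_twice_card_edges] at hub hlb
  omega
end

section
/- Every simple graph on 9 vertices contains a triangle or an independent set of size 4 (i.e., R(3,4) ≤ 9). -/
open Finset

/-- If `G` has no triangle, any common neighborhood is independent. -/
lemma aux_indep {V : Type*} [DecidableEq V] (G : SimpleGraph V)
    (h3 : ∀ s : Finset V, ¬ G.IsNClique 3 s)
    {v : V} {s : Finset V} (hs : ∀ a ∈ s, G.Adj v a) :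
    Gᶜ.IsClique (s : Set V) := by
  intro a ha b hb hab
  rw [SimpleGraph.compl_adj]
  refine ⟨hab, fun hadj => ?_⟩
  exact h3 {v, a, b} (SimpleGraph.is3Clique_triple_iff.2
    ⟨hs a ha, hs b hb, hadj⟩)

/-- Extend an independent 3-set by a non-adjacent outside vertex. -/
lemma aux_extend {V : Type*} [DecidableEq V] (G : SimpleGraph V) {v : V} {s : Finset V}
    (hs : Gᶜ.IsNClique 3 s) (hv : ∀ a ∈ s, v ≠ a ∧ ¬ G.Adj v a) :
    Gᶜ.IsNClique 4 (insert v s) := by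
  have hvs : v ∉ s := fun h => (hv v h).1 rfl
  refine ⟨?_, by rw [Finset.card_insert_of_notMem hvs, hs.2]⟩
  rw [Finset.coe_insert]
  refine hs.1.insert (fun b hb _ => ?_)
  rw [SimpleGraph.compl_adj]
  exact ⟨(hv b hb).1, (hv b hb).2⟩

theorem stmt_2 (G : SimpleGraph (Fin 9)) :
    (∃ s : Finset (Fin 9), G.IsNClique 3 s) ∨
    (∃ s : Finset (Fin 9), Gᶜ.IsNClique 4 s) := by
  classical
  by_contra hcon
  push_neg at hcon
  obtain ⟨h3, h4⟩ := hcon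
  -- every vertex has degree exactly 3
  have hdeg : ∀ v : Fin 9, G.degree v = 3 := by
    intro v
    by_contra hne
    have hcard : (G.neighborFinset v).card = G.degree v := G.card_neighborFinset_eq_degree v
    rcases lt_or_gt_of_ne hne with hlt | hgt
    · -- degree ≤ 2 : at least 6 non-neighbors
      set T : Finset (Fin 9) := (Finset.univ.erase v) \ G.neighborFinset v with hT
      have hsub : G.neighborFinset v ⊆ Finset.univ.erase v := by
        intro a ha
        rw [SimpleGraph.mem_neighborFinset] at ha
        exact Finset.mem_erase.2 ⟨(G.ne_of_adj ha).symm, Finset.mem_univ a⟩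
      have hTcard : T.card = 8 - G.degree v := by
        rw [hT, Finset.card_sdiff_of_subset hsub, hcard]
        simp
      have hT6 : 6 ≤ T.card := by omega
      -- facts about members of T
      have hTmem : ∀ a ∈ T, v ≠ a ∧ ¬ G.Adj v a := by
        intro a ha
        rw [hT, Finset.mem_sdiff, Finset.mem_erase, SimpleGraph.mem_neighborFinset] at ha
        exact ⟨fun h => ha.1.1 h.symm, ha.2⟩
      -- an independent 3-set inside T yields a contradiction
      have key : ∀ s : Finset (Fin 9), s ⊆ T → ¬ Gᶜ.IsNClique 3 s := by
        intro s hsT hcl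
        exact h4 _ (aux_extend G hcl (fun a ha => hTmem a (hsT ha)))
      -- pick u ∈ T
      obtain ⟨u, hu⟩ := Finset.card_pos.1 (by omega : 0 < T.card)
      set T' := T.erase u with hT'
      have hT'5 : 5 ≤ T'.card := by
        rw [hT', Finset.card_erase_of_mem hu]; omega
      set A := T'.filter (fun a => G.Adj u a) with hA
      set B := T'.filter (fun a => ¬ G.Adj u a) with hB
      have hAB : A.card + B.card = T'.card := Finset.card_filter_add_card_filter_not _
      rcases (by omega : 3 ≤ A.card ∨ 3 ≤ B.card) with h | h
      · -- A independent (no triangle), take 3-subset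
        have hAind : Gᶜ.IsClique (A : Set (Fin 9)) :=
          aux_indep G h3 (fun a ha => (Finset.mem_filter.1 ha).2)
        obtain ⟨s, hsA, hs3⟩ := Finset.exists_subset_card_eq h
        refine key s (fun a ha => ?_) ⟨hAind.subset (by exact_mod_cast hsA), hs3⟩
        exact Finset.erase_subset u T (Finset.mem_filter.1 (hsA ha)).1
      · -- B : non-neighbors of u
        by_cases hE : ∃ a ∈ B, ∃ b ∈ B, a ≠ b ∧ ¬ G.Adj a b
        · obtain ⟨a, ha, b, hb, hab, hnadj⟩ := hE
          have hua : u ≠ a ∧ ¬ G.Adj u a :=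
            ⟨fun h => (Finset.mem_erase.1 (Finset.mem_filter.1 ha).1).1 h.symm,
             (Finset.mem_filter.1 ha).2⟩
          have hub : u ≠ b ∧ ¬ G.Adj u b :=
            ⟨fun h => (Finset.mem_erase.1 (Finset.mem_filter.1 hb).1).1 h.symm,
             (Finset.mem_filter.1 hb).2⟩
          have hclq : Gᶜ.IsNClique 3 {u, a, b} := by
            rw [SimpleGraph.is3Clique_triple_iff, SimpleGraph.compl_adj,
              SimpleGraph.compl_adj, SimpleGraph.compl_adj]
            exact ⟨⟨hua.1, hua.2⟩, ⟨hub.1, hub.2⟩, ⟨hab, hnadj⟩⟩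
          refine key _ ?_ hclq
          intro x hx
          simp only [Finset.mem_insert, Finset.mem_singleton] at hx
          rcases hx with rfl | rfl | rfl
          · exact hu
          · exact Finset.erase_subset u T (Finset.mem_filter.1 ha).1
          · exact Finset.erase_subset u T (Finset.mem_filter.1 hb).1
        · -- B is a clique in G: triangle
          push_neg at hE
          have hBclq : G.IsClique (B : Set (Fin 9)) := by
            intro a ha b hb hab
            exact hE a ha b hb hab
          obtain ⟨s, hsB, hs3⟩ := Finset.exists_subset_card_eq h
          exact h3 s ⟨hBclq.subset (by exact_mod_cast hsB), hs3⟩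
    · -- degree ≥ 4 : neighborhood independent of size ≥ 4
      have hind : Gᶜ.IsClique ((G.neighborFinset v : Finset (Fin 9)) : Set (Fin 9)) :=
        aux_indep G h3 (fun a ha => (SimpleGraph.mem_neighborFinset G v a).1 ha)
      obtain ⟨s, hsN, hs4⟩ := Finset.exists_subset_card_eq (by omega : 4 ≤ (G.neighborFinset v).card)
      exact h4 s ⟨hind.subset (by exact_mod_cast hsN), hs4⟩
  -- handshake: sum of degrees = 27 is odd, contradiction
  have hsum := G.sum_degrees_eq_twice_card_edges
  simp only [hdeg] at hsum
  simp at hsum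
  omega
end
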